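/- arXiv:2207.11957 — 7 statements merged into one kernel-verified Lean document; each statement's English description precedes it below -/
import Mathlib

section
/- If a vector of nonnegative functions (u^1,...,u^m) on the vertex set V of a finite connected graph G satisfies the fixed-point system u^l(x) = max(H(x, ū^l(x) - Σ_{p≠l} ū^p(x)) - f_l(x, u^l(x)), 0) for interior vertices x and u^l = φ^l on the boundary ∂G with φ^i·φ^j = 0 for i≠j, then u^i(x)·u^j(x) = 0 for all x ∈ V and all i ≠ j. -/
open Finset

noncomputable def nbrAvg {V : Type*} [Fintype V] (G : SimpleGraph V) [DecidableRel G.Adj]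
    (u : V → ℝ) (x : V) : ℝ :=
  (∑ y ∈ G.neighborFinset x, u y) / (G.degree x)

def hatFn {V : Type*} {m : ℕ} (u : Fin m → V → ℝ) (l : Fin m) (x : V) : ℝ :=
  u l x - ∑ p ∈ Finset.univ.erase l, u p x

/-- `u` is a (nonnegative) solution of the discrete system with boundary set `Bd`,
nonlinearities `H`, `f`, and boundary data `φ`. -/
def IsSol {V : Type*} {m : ℕ} [Fintype V] (G : SimpleGraph V) [DecidableRel G.Adj]
    (Bd : Set V) (H : V → ℝ → ℝ) (f : Fin m → V → ℝ → ℝ) (φ : Fin m → V → ℝ)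
    (u : Fin m → V → ℝ) : Prop :=
  (∀ l x, 0 ≤ u l x) ∧
  (∀ l x, x ∉ Bd → u l x =
      max (H x (nbrAvg G (u l) x - ∑ p ∈ Finset.univ.erase l, nbrAvg G (u p) x)
           - f l x (u l x)) 0) ∧
  (∀ l x, x ∈ Bd → u l x = φ l x)

theorem disjointness_of_solutions {V : Type*} {m : ℕ} [Fintype V] (G : SimpleGraph V) [DecidableRel G.Adj]
    (Bd : Set V) (H : V → ℝ → ℝ) (f : Fin m → V → ℝ → ℝ) (φ : Fin m → V → ℝ)
    (hconn : G.Connected) (hBd : Bd.Nonempty)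
    (hHmono : ∀ x : V, Monotone (H x)) (hH0 : ∀ x, H x 0 = 0)
    (hHodd : ∀ x s, H x (-s) = -H x s)
    (hfmono : ∀ l x, Monotone (f l x)) (hf0 : ∀ l x, f l x 0 = 0)
    (hfodd : ∀ l x s, f l x (-s) = -f l x s)
    (hφ : ∀ i j : Fin m, i ≠ j → ∀ x, φ i x * φ j x = 0)
    (hφnn : ∀ l x, 0 ≤ φ l x)
    (u : Fin m → V → ℝ) (hu : IsSol G Bd H f φ u) :
    ∀ x : V, ∀ i j : Fin m, i ≠ j → u i x * u j x = 0 := by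
  obtain ⟨hnn, hint, hbd⟩ := hu
  intro x i j hij
  by_cases hx : x ∈ Bd
  · rw [hbd i x hx, hbd j x hx]; exact hφ i j hij x
  · by_contra hprod
    have hui : 0 < u i x :=
      lt_of_le_of_ne (hnn i x) (fun h => hprod (by rw [← h]; ring))
    have huj : 0 < u j x :=
      lt_of_le_of_ne (hnn j x) (fun h => hprod (by rw [← h]; ring))
    have hann : ∀ p : Fin m, 0 ≤ nbrAvg G (u p) x := by
      intro p
      unfold nbrAvg
      exact div_nonneg (Finset.sum_nonneg fun y _ => hnn p y) (Nat.cast_nonneg _)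
    have key : ∀ l : Fin m, 0 < u l x →
        ∑ p ∈ Finset.univ.erase l, nbrAvg G (u p) x < nbrAvg G (u l) x := by
      intro l hl
      have heq := hint l x hx
      have hfl : 0 ≤ f l x (u l x) := by
        have := hfmono l x (hnn l x); rwa [hf0] at this
      have hH : 0 < H x (nbrAvg G (u l) x - ∑ p ∈ Finset.univ.erase l, nbrAvg G (u p) x) := by
        by_contra hc
        push_neg at hc
        rw [max_eq_right (by linarith)] at heq
        linarith
      by_contra hc
      push_neg at hc
      have := hHmono x (show nbrAvg G (u l) x
          - ∑ p ∈ Finset.univ.erase l, nbrAvg G (u p) x ≤ 0 by linarith)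
      rw [hH0] at this
      linarith
    have hi := key i hui
    have hj := key j huj
    have h1 : nbrAvg G (u j) x ≤ ∑ p ∈ Finset.univ.erase i, nbrAvg G (u p) x :=
      Finset.single_le_sum (fun p _ => hann p)
        (Finset.mem_erase.mpr ⟨hij.symm, Finset.mem_univ j⟩)
    have h2 : nbrAvg G (u i) x ≤ ∑ p ∈ Finset.univ.erase j, nbrAvg G (u p) x :=
      Finset.single_le_sum (fun p _ => hann p)
        (Finset.mem_erase.mpr ⟨hij, Finset.mem_univ i⟩)
    linarith
end

section
/- If in addition H is 1-Lipschitz in its second variable, then for any two solutions (u^1,...,u^m), (v^1,...,v^m) of the system and every l = 1,...,m, the maximum over V of û^l - v̂^l equals the maximum of û^l - v̂^l over the set {x ∈ V : u^l(x) ≤ v^l(x)}; i.e., the maximum of the difference of hat-functions is attained at a vertex where u^l(x) ≤ v^l(x). -/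
open Finset

section Aux

variable {V : Type*} [Fintype V] (G : SimpleGraph V) [DecidableRel G.Adj]

lemma nbrAvg_nonneg (u : V → ℝ) (h : ∀ y, 0 ≤ u y) (x : V) : 0 ≤ nbrAvg G u x :=
  div_nonneg (Finset.sum_nonneg fun y _ => h y) (Nat.cast_nonneg _)

lemma nbrAvg_sub (u w : V → ℝ) (x : V) :
    nbrAvg G (fun y => u y - w y) x = nbrAvg G u x - nbrAvg G w x := by
  unfold nbrAvg
  rw [Finset.sum_sub_distrib, sub_div]

lemma nbrAvg_add (u w : V → ℝ) (x : V) :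
    nbrAvg G (fun y => u y + w y) x = nbrAvg G u x + nbrAvg G w x := by
  unfold nbrAvg
  rw [Finset.sum_add_distrib, add_div]

lemma nbrAvg_mono (u w : V → ℝ) (h : ∀ y, u y ≤ w y) (x : V) :
    nbrAvg G u x ≤ nbrAvg G w x := by
  unfold nbrAvg
  exact div_le_div_of_nonneg_right (Finset.sum_le_sum fun y _ => h y) (Nat.cast_nonneg _)

lemma nbrAvg_const (c : ℝ) (x : V) (h : 0 < G.degree x) : nbrAvg G (fun _ => c) x = c := by
  unfold nbrAvg
  rw [Finset.sum_const, SimpleGraph.card_neighborFinset_eq_degree, nsmul_eq_mul]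
  have hc : (G.degree x : ℝ) ≠ 0 := by positivity
  field_simp

lemma nbrAvg_hat {m : ℕ} (u : Fin m → V → ℝ) (l : Fin m) (x : V) :
    nbrAvg G (hatFn u l) x
      = nbrAvg G (u l) x - ∑ p ∈ Finset.univ.erase l, nbrAvg G (u p) x := by
  unfold nbrAvg hatFn
  rw [Finset.sum_sub_distrib, sub_div, Finset.sum_comm, Finset.sum_div, Finset.sum_div]

lemma hat_pair {m : ℕ} (v : Fin m → V → ℝ) (hv : ∀ p y, 0 ≤ v p y)
    {l p : Fin m} (hlp : p ≠ l) (y : V) : hatFn v l y + hatFn v p y ≤ 0 := by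
  unfold hatFn
  have hpl : p ∈ Finset.univ.erase l := Finset.mem_erase.2 ⟨hlp, Finset.mem_univ p⟩
  have hlp' : l ∈ Finset.univ.erase p := Finset.mem_erase.2 ⟨Ne.symm hlp, Finset.mem_univ l⟩
  rw [← Finset.add_sum_erase _ _ hpl, ← Finset.add_sum_erase _ _ hlp']
  have h1 : 0 ≤ ∑ q ∈ (Finset.univ.erase l).erase p, v q y :=
    Finset.sum_nonneg fun q _ => hv q y
  have h2 : 0 ≤ ∑ q ∈ (Finset.univ.erase p).erase l, v q y :=
    Finset.sum_nonneg fun q _ => hv q y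
  linarith

/-- At an interior point where a component is positive, the solution satisfies the
unconstrained equation, is dominated by the hat-average, and all other
components vanish. -/
lemma interior_pos {m : ℕ} {Bd : Set V} {H : V → ℝ → ℝ} {f : Fin m → V → ℝ → ℝ}
    {φ : Fin m → V → ℝ}
    (hHmono : ∀ x : V, Monotone (H x)) (hH0 : ∀ x, H x 0 = 0)
    (hfmono : ∀ l x, Monotone (f l x)) (hf0 : ∀ l x, f l x 0 = 0)
    (hHlip : ∀ x s t, |H x s - H x t| ≤ |s - t|)
    {u : Fin m → V → ℝ} (hu : IsSol G Bd H f φ u)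
    {l : Fin m} {x : V} (hx : x ∉ Bd) (hpos : 0 < u l x) :
    u l x = H x (nbrAvg G (hatFn u l) x) - f l x (u l x) ∧
    u l x ≤ nbrAvg G (hatFn u l) x ∧ ∀ q, q ≠ l → u q x = 0 := by
  obtain ⟨hnn, heq, hbd⟩ := hu
  have hhat : ∀ q : Fin m, nbrAvg G (hatFn u q) x
      = nbrAvg G (u q) x - ∑ p ∈ Finset.univ.erase q, nbrAvg G (u p) x :=
    fun q => nbrAvg_hat G u q x
  have hequ := heq l x hx
  rw [← hhat l] at hequ
  have hfnn : 0 ≤ f l x (u l x) := by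
    rw [← hf0 l x]; exact hfmono l x hpos.le
  have hueq : u l x = H x (nbrAvg G (hatFn u l) x) - f l x (u l x) := by
    rcases le_or_gt (H x (nbrAvg G (hatFn u l) x) - f l x (u l x)) 0 with h | h
    · rw [max_eq_right h] at hequ; linarith
    · rw [max_eq_left h.le] at hequ; exact hequ
  have hHa : 0 < H x (nbrAvg G (hatFn u l) x) := by linarith
  have hapos : 0 < nbrAvg G (hatFn u l) x := by
    by_contra hle
    push_neg at hle
    have : H x (nbrAvg G (hatFn u l) x) ≤ 0 := by
      rw [← hH0 x]; exact hHmono x hle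
    linarith
  have hHle : H x (nbrAvg G (hatFn u l) x) ≤ nbrAvg G (hatFn u l) x := by
    have h1 := hHlip x (nbrAvg G (hatFn u l) x) 0
    rw [hH0 x, sub_zero, sub_zero] at h1
    calc H x (nbrAvg G (hatFn u l) x) ≤ |H x (nbrAvg G (hatFn u l) x)| := le_abs_self _
      _ ≤ |nbrAvg G (hatFn u l) x| := h1
      _ = nbrAvg G (hatFn u l) x := abs_of_pos hapos
  refine ⟨hueq, by linarith, ?_⟩
  intro q hq
  have hb : nbrAvg G (hatFn u q) x ≤ -(nbrAvg G (hatFn u l) x) := by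
    rw [hhat q, hhat l]
    have hql : q ∈ Finset.univ.erase l := Finset.mem_erase.2 ⟨hq, Finset.mem_univ q⟩
    have hlq : l ∈ Finset.univ.erase q :=
      Finset.mem_erase.2 ⟨fun h => hq h.symm, Finset.mem_univ l⟩
    rw [← Finset.add_sum_erase _ _ hql, ← Finset.add_sum_erase _ _ hlq]
    have h1 : 0 ≤ ∑ p ∈ (Finset.univ.erase l).erase q, nbrAvg G (u p) x :=
      Finset.sum_nonneg fun p _ => nbrAvg_nonneg G _ (fun y => hnn p y) x
    have h2 : 0 ≤ ∑ p ∈ (Finset.univ.erase q).erase l, nbrAvg G (u p) x :=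
      Finset.sum_nonneg fun p _ => nbrAvg_nonneg G _ (fun y => hnn p y) x
    linarith
  have hequq := heq q x hx
  rw [← hhat q] at hequq
  have hfq : 0 ≤ f q x (u q x) := by
    rw [← hf0 q x]; exact hfmono q x (hnn q x)
  have hHb : H x (nbrAvg G (hatFn u q) x) ≤ 0 := by
    rw [← hH0 x]
    exact hHmono x (by linarith)
  rw [max_eq_right (by linarith)] at hequq
  exact hequq

end Aux

theorem max_attained_where_le {V : Type*} {m : ℕ} [Fintype V] (G : SimpleGraph V) [DecidableRel G.Adj]
    (Bd : Set V) (H : V → ℝ → ℝ) (f : Fin m → V → ℝ → ℝ) (φ : Fin m → V → ℝ)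
    (hconn : G.Connected) (hBd : Bd.Nonempty)
    (hHmono : ∀ x : V, Monotone (H x)) (hH0 : ∀ x, H x 0 = 0)
    (hHodd : ∀ x s, H x (-s) = -H x s)
    (hfmono : ∀ l x, Monotone (f l x)) (hf0 : ∀ l x, f l x 0 = 0)
    (hfodd : ∀ l x s, f l x (-s) = -f l x s)
    (hφ : ∀ i j : Fin m, i ≠ j → ∀ x, φ i x * φ j x = 0)
    (hφnn : ∀ l x, 0 ≤ φ l x)
    (hHlip : ∀ x s t, |H x s - H x t| ≤ |s - t|)
    (u v : Fin m → V → ℝ) (hu : IsSol G Bd H f φ u) (hv : IsSol G Bd H f φ v) :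
    ∀ l : Fin m, ∃ x : V, u l x ≤ v l x ∧
      ∀ y : V, hatFn u l y - hatFn v l y ≤ hatFn u l x - hatFn v l x := by
  intro l
  obtain ⟨b, hb⟩ := hBd
  by_contra hcon
  push_neg at hcon
  set d : V → ℝ := fun z => hatFn u l z - hatFn v l z with hd
  -- a global maximizer of d
  obtain ⟨xs, -, hxs⟩ := Finset.exists_max_image Finset.univ d ⟨b, Finset.mem_univ b⟩
  have hmaxall : ∀ z, d z ≤ d xs := fun z => hxs z (Finset.mem_univ z)
  -- the key propagation step
  have step : ∀ x y : V, G.Adj x y → (∀ z, d z ≤ d x) → ∀ z, d z ≤ d y := by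
    intro x y hxy hmax
    -- u l x > v l x, otherwise hcon at x contradicts maximality
    have hlt : v l x < u l x := by
      by_contra hle
      push_neg at hle
      obtain ⟨y', hy'⟩ := hcon x hle
      exact absurd (hmax y') (not_le.2 hy')
    have hxBd : x ∉ Bd := by
      intro hxB
      have h1 := hu.2.2 l x hxB
      have h2 := hv.2.2 l x hxB
      rw [h1, h2] at hlt
      exact lt_irrefl _ hlt
    have hdeg : 0 < G.degree x := (G.degree_pos_iff_exists_adj x).2 ⟨y, hxy⟩
    have hupos : 0 < u l x := lt_of_le_of_lt (hv.1 l x) hlt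
    obtain ⟨hueq, hule, huseg⟩ :=
      interior_pos G hHmono hH0 hfmono hf0 hHlip hu hxBd hupos
    -- sum of the other u-components vanishes at x
    have husum : ∑ q ∈ Finset.univ.erase l, u q x = 0 :=
      Finset.sum_eq_zero fun q hq => huseg q (Finset.mem_erase.1 hq).1
    -- the core inequality : d x ≤ nbrAvg G d x
    have key : d x ≤ nbrAvg G d x := by
      by_cases hvp : ∃ p, p ≠ l ∧ 0 < v p x
      · -- some other component of v is positive at x
        obtain ⟨p, hpl, hvpos⟩ := hvp
        obtain ⟨hveq, hvle, hvseg⟩ :=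
          interior_pos G hHmono hH0 hfmono hf0 hHlip hv hxBd hvpos
        have hvl0 : v l x = 0 := hvseg l (fun h => hpl h.symm)
        have hpmem : p ∈ Finset.univ.erase l := Finset.mem_erase.2 ⟨hpl, Finset.mem_univ p⟩
        have hvsum : ∑ q ∈ Finset.univ.erase l, v q x = v p x := by
          rw [← Finset.add_sum_erase _ _ hpmem]
          have : ∑ q ∈ (Finset.univ.erase l).erase p, v q x = 0 :=
            Finset.sum_eq_zero fun q hq => hvseg q (Finset.mem_erase.1 hq).1
          rw [this, add_zero]
        have hdx : d x = u l x + v p x := by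
          simp only [hd, hatFn]
          rw [husum, hvsum, hvl0]
          ring
        have hpt : ∀ z, hatFn u l z + hatFn v p z ≤ d z := by
          intro z
          have := hat_pair v hv.1 hpl z
          simp only [hd]
          linarith
        calc d x = u l x + v p x := hdx
          _ ≤ nbrAvg G (hatFn u l) x + nbrAvg G (hatFn v p) x := add_le_add hule hvle
          _ = nbrAvg G (fun z => hatFn u l z + hatFn v p z) x := (nbrAvg_add G _ _ x).symm
          _ ≤ nbrAvg G d x := nbrAvg_mono G _ _ hpt x
      · -- all other components of v vanish at x
        push_neg at hvp
        have hvq0 : ∀ q, q ≠ l → v q x = 0 := fun q hq =>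
          le_antisymm (hvp q hq) (hv.1 q x)
        have hvsum : ∑ q ∈ Finset.univ.erase l, v q x = 0 :=
          Finset.sum_eq_zero fun q hq => hvq0 q (Finset.mem_erase.1 hq).1
        have hdx : d x = u l x - v l x := by
          simp only [hd, hatFn]
          rw [husum, hvsum]
          ring
        -- v l x ≥ H(a_v) - f(v l x)
        have hveq := hv.2.1 l x hxBd
        rw [← nbrAvg_hat G v l x] at hveq
        have hvge : H x (nbrAvg G (hatFn v l) x) - f l x (v l x) ≤ v l x := by
          have h0 := le_max_left (H x (nbrAvg G (hatFn v l) x) - f l x (v l x)) (0:ℝ)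
          rw [← hveq] at h0
          exact h0
        have hfmono' : f l x (v l x) ≤ f l x (u l x) := hfmono l x hlt.le
        have hdiff : u l x - v l x ≤
            H x (nbrAvg G (hatFn u l) x) - H x (nbrAvg G (hatFn v l) x) := by
          linarith [hueq, hvge]
        have hHpos : 0 < H x (nbrAvg G (hatFn u l) x) - H x (nbrAvg G (hatFn v l) x) := by
          linarith
        have hav : nbrAvg G (hatFn v l) x < nbrAvg G (hatFn u l) x := by
          by_contra hle
          push_neg at hle
          have := hHmono x hle
          linarith
        have hlip : H x (nbrAvg G (hatFn u l) x) - H x (nbrAvg G (hatFn v l) x)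
            ≤ nbrAvg G (hatFn u l) x - nbrAvg G (hatFn v l) x := by
          have h1 := hHlip x (nbrAvg G (hatFn u l) x) (nbrAvg G (hatFn v l) x)
          calc H x (nbrAvg G (hatFn u l) x) - H x (nbrAvg G (hatFn v l) x)
              ≤ |H x (nbrAvg G (hatFn u l) x) - H x (nbrAvg G (hatFn v l) x)| := le_abs_self _
            _ ≤ |nbrAvg G (hatFn u l) x - nbrAvg G (hatFn v l) x| := h1
            _ = nbrAvg G (hatFn u l) x - nbrAvg G (hatFn v l) x :=
                abs_of_pos (sub_pos.2 hav)
        have havg : nbrAvg G (hatFn u l) x - nbrAvg G (hatFn v l) x = nbrAvg G d x := by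
          rw [hd]
          exact (nbrAvg_sub G (hatFn u l) (hatFn v l) x).symm
        rw [hdx]
        linarith
    -- the average is also at most d x, hence equality, hence every neighbor attains the max
    have hle2 : nbrAvg G d x ≤ d x := by
      have := nbrAvg_mono G d (fun _ => d x) (fun z => hmax z) x
      rwa [nbrAvg_const G (d x) x hdeg] at this
    have havg_eq : nbrAvg G d x = d x := le_antisymm hle2 key
    have hdegne : (G.degree x : ℝ) ≠ 0 := by positivity
    have hsum : ∑ z ∈ G.neighborFinset x, d z = ∑ z ∈ G.neighborFinset x, d x := by
      have h1 : (∑ z ∈ G.neighborFinset x, d z) = d x * G.degree x := by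
        have h0 := havg_eq
        unfold nbrAvg at h0
        rw [div_eq_iff hdegne] at h0
        exact h0
      rw [h1, Finset.sum_const, SimpleGraph.card_neighborFinset_eq_degree, nsmul_eq_mul]
      ring
    have heach := (Finset.sum_eq_sum_iff_of_le (fun z _ => hmax z)).1 hsum
    have hdy : d y = d x := heach y ((SimpleGraph.mem_neighborFinset G x y).2 hxy)
    intro z
    rw [hdy]
    exact hmax z
  -- propagate the maximum along a walk to the boundary point b
  have walkprop : ∀ (a c : V) (w : G.Walk a c), (∀ z, d z ≤ d a) → ∀ z, d z ≤ d c := by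
    intro a c w
    induction w with
    | nil => exact fun h => h
    | cons h p ih => exact fun ha => ih (step _ _ h ha)
  obtain ⟨w⟩ := hconn.preconnected xs b
  have hbmax : ∀ z, d z ≤ d b := walkprop xs b w hmaxall
  -- but at b one has u l b = v l b, contradicting hcon
  have hble : u l b ≤ v l b := by
    rw [hu.2.2 l b hb, hv.2.2 l b hb]
  obtain ⟨y', hy'⟩ := hcon b hble
  exact absurd (hbmax y') (not_le.2 hy')
end

section
/- For two solutions (u^l) and (v^l) of the system, if the set inclusion chain holds, then {x : u^l(x) > v^l(x)} ⊆ {x : û^l(x) > v̂^l(x)} ⊆ {x : u^l(x) ≥ v^l(x)} for every l. -/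
open Finset

lemma hat_le_aux {V : Type*} {m : ℕ} (u : Fin m → V → ℝ) (hu0 : ∀ l x, 0 ≤ u l x)
    (l : Fin m) (x : V) : hatFn u l x ≤ u l x := by
  unfold hatFn
  have : (0:ℝ) ≤ ∑ p ∈ Finset.univ.erase l, u p x :=
    Finset.sum_nonneg fun p _ => hu0 p x
  linarith

lemma hat_eq_aux {V : Type*} {m : ℕ} (u : Fin m → V → ℝ)
    (hud : ∀ i j : Fin m, i ≠ j → ∀ x, u i x * u j x = 0) (l : Fin m) (x : V)
    (h : 0 < u l x) : hatFn u l x = u l x := by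
  unfold hatFn
  have hs : ∑ p ∈ Finset.univ.erase l, u p x = 0 := by
    apply Finset.sum_eq_zero
    intro p hp
    rcases mul_eq_zero.mp (hud p l (Finset.mem_erase.mp hp).1 x) with h1 | h1
    · exact h1
    · exact absurd h1 (ne_of_gt h)
  linarith

theorem inclusion_chain {V : Type*} {m : ℕ} (u v : Fin m → V → ℝ)
    (hu0 : ∀ l x, 0 ≤ u l x) (hv0 : ∀ l x, 0 ≤ v l x)
    (hud : ∀ i j : Fin m, i ≠ j → ∀ x, u i x * u j x = 0)
    (hvd : ∀ i j : Fin m, i ≠ j → ∀ x, v i x * v j x = 0) :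
    ∀ (l : Fin m) (x : V),
      (v l x < u l x → hatFn v l x < hatFn u l x) ∧
      (hatFn v l x < hatFn u l x → v l x ≤ u l x) := by
  intro l x
  constructor
  · intro h
    have hupos : 0 < u l x := lt_of_le_of_lt (hv0 l x) h
    have h1 := hat_eq_aux u hud l x hupos
    have h2 := hat_le_aux v hv0 l x
    linarith
  · intro h
    by_contra hlt
    push_neg at hlt
    have hvpos : 0 < v l x := lt_of_le_of_lt (hu0 l x) hlt
    have h1 := hat_eq_aux v hvd l x hvpos
    have h2 := hat_le_aux u hu0 l x
    linarith
end

section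
/- If (u^1,...,u^m) solves the system and u^i(x_0) > 0 at an interior vertex x_0, then ū^i(x_0) - Σ_{p≠i} ū^p(x_0) ≥ 0, and consequently for every j ≠ i one has ū^j(x_0) - Σ_{p≠j} ū^p(x_0) ≤ 0 and u^j(x_0) = 0. -/
open Finset

theorem positivity_forces_sign {V : Type*} {m : ℕ} [Fintype V] (G : SimpleGraph V) [DecidableRel G.Adj]
    (Bd : Set V) (H : V → ℝ → ℝ) (f : Fin m → V → ℝ → ℝ) (φ : Fin m → V → ℝ)
    (hconn : G.Connected) (hBd : Bd.Nonempty)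
    (hHmono : ∀ x : V, Monotone (H x)) (hH0 : ∀ x, H x 0 = 0)
    (hHodd : ∀ x s, H x (-s) = -H x s)
    (hfmono : ∀ l x, Monotone (f l x)) (hf0 : ∀ l x, f l x 0 = 0)
    (hfodd : ∀ l x s, f l x (-s) = -f l x s)
    (hφ : ∀ i j : Fin m, i ≠ j → ∀ x, φ i x * φ j x = 0)
    (hφnn : ∀ l x, 0 ≤ φ l x)
    (u : Fin m → V → ℝ) (hu : IsSol G Bd H f φ u)
    (i : Fin m) (x₀ : V) (hx₀ : x₀ ∉ Bd) (hpos : 0 < u i x₀) :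
    0 ≤ nbrAvg G (u i) x₀ - ∑ p ∈ Finset.univ.erase i, nbrAvg G (u p) x₀ ∧
    ∀ j : Fin m, j ≠ i →
      (nbrAvg G (u j) x₀ - ∑ p ∈ Finset.univ.erase j, nbrAvg G (u p) x₀ ≤ 0 ∧
        u j x₀ = 0) := by

  obtain ⟨hnn, heq, -⟩ := hu
  have hAnn : ∀ p : Fin m, 0 ≤ nbrAvg G (u p) x₀ := by
    intro p
    apply div_nonneg (Finset.sum_nonneg fun y _ => hnn p y)
    exact Nat.cast_nonneg _
  have hfnn : ∀ l : Fin m, 0 ≤ f l x₀ (u l x₀) := by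
    intro l
    have := hfmono l x₀ (hnn l x₀)
    rwa [hf0] at this
  have hS : ∀ l : Fin m, ∑ p ∈ Finset.univ.erase l, nbrAvg G (u p) x₀
      = (∑ p, nbrAvg G (u p) x₀) - nbrAvg G (u l) x₀ := by
    intro l
    have := Finset.sum_erase_add Finset.univ (fun p => nbrAvg G (u p) x₀)
      (Finset.mem_univ l)
    linarith
  have hti : 0 ≤ nbrAvg G (u i) x₀ - ∑ p ∈ Finset.univ.erase i, nbrAvg G (u p) x₀ := by
    by_contra h
    push_neg at h
    have hH : H x₀ (nbrAvg G (u i) x₀ - ∑ p ∈ Finset.univ.erase i, nbrAvg G (u p) x₀) ≤ 0 := by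
      have := hHmono x₀ (le_of_lt h)
      rwa [hH0] at this
    have hui := heq i x₀ hx₀
    have : u i x₀ ≤ 0 := by
      rw [hui]
      apply max_le _ le_rfl
      linarith [hfnn i]
    linarith
  refine ⟨hti, fun j hj => ?_⟩
  have hij : i ≠ j := fun h => hj h.symm
  have hsum : nbrAvg G (u i) x₀ + nbrAvg G (u j) x₀ ≤ ∑ p, nbrAvg G (u p) x₀ := by
    have h2 := Finset.sum_le_sum_of_subset_of_nonneg
      (Finset.subset_univ ({i, j} : Finset (Fin m))) (fun p _ _ => hAnn p)
    rwa [Finset.sum_pair hij] at h2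
  have htj : nbrAvg G (u j) x₀ - ∑ p ∈ Finset.univ.erase j, nbrAvg G (u p) x₀ ≤ 0 := by
    rw [hS j]; rw [hS i] at hti; linarith
  refine ⟨htj, ?_⟩
  have hH : H x₀ (nbrAvg G (u j) x₀ - ∑ p ∈ Finset.univ.erase j, nbrAvg G (u p) x₀) ≤ 0 := by
    have := hHmono x₀ htj
    rwa [hH0] at this
  rw [heq j x₀ hx₀]
  apply max_eq_right
  linarith [hfnn j]
end

section
/- For two solutions of the system with m ≥ 2 components, if A := max_l max_{x∈V}(û^l(x) - v̂^l(x)) > 0 is attained at index l_0 and vertex y_0, then u^{l_0}(y_0) = v^{l_0}(y_0) = 0 and A = Σ_{l≠l_0}(v^l(y_0) - u^l(y_0)); in particular Σ_{l≠l_0} v^l(y_0) > 0. -/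
open Finset

theorem max_point_structure {V : Type*} {m : ℕ} (hm : 2 ≤ m) (u v : Fin m → V → ℝ)
    (hu0 : ∀ l x, 0 ≤ u l x) (hv0 : ∀ l x, 0 ≤ v l x)
    (hud : ∀ i j : Fin m, i ≠ j → ∀ x, u i x * u j x = 0)
    (hvd : ∀ i j : Fin m, i ≠ j → ∀ x, v i x * v j x = 0)
    (A : ℝ)
    (hA : IsGreatest {a : ℝ | ∃ (l : Fin m) (x : V), a = hatFn u l x - hatFn v l x} A)
    (hApos : 0 < A) (l₀ : Fin m) (y₀ : V)
    (hatt : hatFn u l₀ y₀ - hatFn v l₀ y₀ = A)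
    (hle : u l₀ y₀ ≤ v l₀ y₀) :
    u l₀ y₀ = 0 ∧ v l₀ y₀ = 0 ∧
    A = ∑ l ∈ Finset.univ.erase l₀, (v l y₀ - u l y₀) ∧
    0 < ∑ l ∈ Finset.univ.erase l₀, v l y₀ := by
  have key : (u l₀ y₀ - v l₀ y₀) + ∑ p ∈ Finset.univ.erase l₀, (v p y₀ - u p y₀) = A := by
    simp only [hatFn, Finset.sum_sub_distrib] at hatt ⊢
    linarith
  have hsum : A ≤ ∑ p ∈ Finset.univ.erase l₀, (v p y₀ - u p y₀) := by linarith
  have hlt : ∑ p ∈ Finset.univ.erase l₀, (0:ℝ) <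
      ∑ p ∈ Finset.univ.erase l₀, (v p y₀ - u p y₀) := by
    simpa using lt_of_lt_of_le hApos hsum
  obtain ⟨p, hp, hplt⟩ := Finset.exists_lt_of_sum_lt hlt
  have hpne : p ≠ l₀ := (Finset.mem_erase.mp hp).1
  have hvp : 0 < v p y₀ := lt_of_le_of_lt (hu0 p y₀) (by linarith)
  have hvl0 : v l₀ y₀ = 0 := by
    have := hvd p l₀ hpne y₀
    rcases mul_eq_zero.mp this with h | h
    · exact absurd h (ne_of_gt hvp)
    · exact h
  have hul0 : u l₀ y₀ = 0 := le_antisymm (hvl0 ▸ hle) (hu0 l₀ y₀)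
  refine ⟨hul0, hvl0, ?_, ?_⟩
  · rw [hul0, hvl0] at key; linarith
  · have h1 : ∑ l ∈ Finset.univ.erase l₀, (v l y₀ - u l y₀) ≤
        ∑ l ∈ Finset.univ.erase l₀, v l y₀ :=
      Finset.sum_le_sum fun i _ => by linarith [hu0 i y₀]
    linarith
end

section
/- Symmetry of extremal gaps: for two solutions of the system, the quantities A := max_l max_{x∈V}(û^l(x) - v̂^l(x)) and B := max_l max_{x∈V}(v̂^l(x) - û^l(x)) satisfy: A > 0 if and only if B > 0, and in that case A = B. -/
open Finset

/-!
At every vertex at most one component of a solution is positive: on the boundary because the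
data have disjoint supports, inside because a positive component `u^l(x)` forces
`ū^l(x) > Σ_{p≠l} ū^p(x)`, which can hold for one index only. Given `l` and `x`, choose
`l' ≠ l` such that `v` vanishes at `x` off `{l, l'}`. Then `v̂^l + v̂^{l'} = 0` at `x`, while
`û^l + û^{l'} ≤ 0` since `u ≥ 0`; hence `û^l - v̂^l ≤ v̂^{l'} - û^{l'}` at `x`, so `A ≤ B`.
Exchanging `u` and `v` gives `A = B`.
-/

open Function

lemma Set.Subsingleton.exists_ne_subset_pair {ι : Type*} [Nontrivial ι] {s : Set ι}
    (hs : s.Subsingleton) (l : ι) : ∃ l' ≠ l, s ⊆ {l, l'} := by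
  obtain ⟨l', hl'⟩ := exists_ne l
  obtain rfl | ⟨j, rfl⟩ := hs.eq_empty_or_singleton
  · exact ⟨l', hl', Set.empty_subset _⟩
  · by_cases hjl : j = l
    · exact ⟨l', hl', by simp [hjl]⟩
    · exact ⟨j, hjl, by simp⟩

lemma not_lt_sum_erase_and_lt_sum_erase {ι : Type*} [Fintype ι] [DecidableEq ι] {a : ι → ℝ}
    (ha : 0 ≤ a) {l p : ι} (hlp : l ≠ p) :
    ¬ (∑ q ∈ univ.erase l, a q < a l ∧ ∑ q ∈ univ.erase p, a q < a p) := by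
  rintro ⟨hl, hp⟩
  have hp_le : a p ≤ ∑ q ∈ univ.erase l, a q :=
    single_le_sum (fun q _ => ha q) (mem_erase.2 ⟨hlp.symm, mem_univ p⟩)
  have hl_le : a l ≤ ∑ q ∈ univ.erase p, a q :=
    single_le_sum (fun q _ => ha q) (mem_erase.2 ⟨hlp, mem_univ l⟩)
  linarith

lemma nbrAvg_nonneg_s13 {V : Type*} [Fintype V] (G : SimpleGraph V) [DecidableRel G.Adj]
    {u : V → ℝ} (hu : 0 ≤ u) (x : V) : 0 ≤ nbrAvg G u x :=
  div_nonneg (sum_nonneg fun y _ => hu y) (Nat.cast_nonneg _)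

section hatFn

variable {V : Type*} {m : ℕ} (w : Fin m → V → ℝ) {l l' : Fin m} (x : V)

lemma hatFn_add_hatFn (h : l' ≠ l) :
    hatFn w l x + hatFn w l' x = -2 * ∑ q ∈ (univ.erase l).erase l', w q x := by
  unfold hatFn
  rw [← add_sum_erase _ _ (mem_erase.2 ⟨h, mem_univ l'⟩),
    ← add_sum_erase _ _ (mem_erase.2 ⟨h.symm, mem_univ l⟩), erase_right_comm]
  ring

variable {w x}

lemma hatFn_add_hatFn_nonpos (h : l' ≠ l) (hw : ∀ q, 0 ≤ w q x) :
    hatFn w l x + hatFn w l' x ≤ 0 := by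
  rw [hatFn_add_hatFn w x h]
  have := sum_nonneg fun q (_ : q ∈ (univ.erase l).erase l') => hw q
  linarith

lemma hatFn_add_hatFn_eq_zero (h : l' ≠ l) (hw : (support fun q => w q x) ⊆ {l, l'}) :
    hatFn w l x + hatFn w l' x = 0 := by
  rw [hatFn_add_hatFn w x h, sum_eq_zero, mul_zero]
  intro q hq
  obtain ⟨hql', hql, -⟩ := mem_erase.1 hq |>.imp_right mem_erase.1
  exact notMem_support.1 fun hsupp => (hw hsupp).elim hql hql'

lemma exists_hatFn_sub_le_hatFn_sub [Nontrivial (Fin m)] {u v : Fin m → V → ℝ}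
    (hu : ∀ q, 0 ≤ u q x) (hv : (support fun q => v q x).Subsingleton) (l : Fin m) :
    ∃ l', hatFn u l x - hatFn v l x ≤ hatFn v l' x - hatFn u l' x := by
  obtain ⟨l', hl'l, hsupp⟩ := hv.exists_ne_subset_pair l
  have hu' := hatFn_add_hatFn_nonpos hl'l hu
  have hv' := hatFn_add_hatFn_eq_zero hl'l hsupp
  exact ⟨l', by linarith⟩

lemma le_of_isGreatest_hatFn_sub [Nontrivial (Fin m)] {u v : Fin m → V → ℝ} {A B : ℝ}
    (hu : ∀ l x, 0 ≤ u l x) (hv : ∀ x, (support fun l => v l x).Subsingleton)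
    (hA : IsGreatest {a : ℝ | ∃ (l : Fin m) (x : V), a = hatFn u l x - hatFn v l x} A)
    (hB : IsGreatest {b : ℝ | ∃ (l : Fin m) (x : V), b = hatFn v l x - hatFn u l x} B) :
    A ≤ B := by
  obtain ⟨l, x, rfl⟩ := hA.1
  obtain ⟨l', hle⟩ := exists_hatFn_sub_le_hatFn_sub (fun q => hu q x) (hv x) l
  exact hle.trans (hB.2 ⟨l', x, rfl⟩)

end hatFn

namespace IsSol

variable {V : Type*} {m : ℕ} [Fintype V] {G : SimpleGraph V} [DecidableRel G.Adj] {Bd : Set V}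
  {H : V → ℝ → ℝ} {f : Fin m → V → ℝ → ℝ} {φ : Fin m → V → ℝ} {u : Fin m → V → ℝ}

lemma sum_nbrAvg_erase_lt (hu : IsSol G Bd H f φ u) (hHmono : ∀ x, Monotone (H x))
    (hH0 : ∀ x, H x 0 = 0) (hfmono : ∀ l x, Monotone (f l x)) (hf0 : ∀ l x, f l x 0 = 0)
    {l : Fin m} {x : V} (hx : x ∉ Bd) (hpos : 0 < u l x) :
    ∑ p ∈ univ.erase l, nbrAvg G (u p) x < nbrAvg G (u l) x := by
  have hf : 0 ≤ f l x (u l x) := hf0 l x ▸ hfmono l x hpos.le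
  rw [hu.2.1 l x hx] at hpos
  have hH := (lt_max_iff.1 hpos).resolve_right (lt_irrefl 0)
  by_contra! hle
  have := hH0 x ▸ hHmono x (sub_nonpos.2 hle)
  linarith

lemma support_subsingleton (hu : IsSol G Bd H f φ u) (hHmono : ∀ x, Monotone (H x))
    (hH0 : ∀ x, H x 0 = 0) (hfmono : ∀ l x, Monotone (f l x)) (hf0 : ∀ l x, f l x 0 = 0)
    (hφ : ∀ i j : Fin m, i ≠ j → ∀ x, φ i x * φ j x = 0) (x : V) :
    (support fun l => u l x).Subsingleton := by
  intro l hl p hp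
  by_contra hlp
  rw [mem_support] at hl hp
  by_cases hx : x ∈ Bd
  · rw [hu.2.2 l x hx] at hl
    rw [hu.2.2 p x hx] at hp
    exact mul_ne_zero hl hp (hφ l p hlp x)
  · have hpos : ∀ q, u q x ≠ 0 → 0 < u q x := fun q hq => (hu.1 q x).lt_of_ne' hq
    exact not_lt_sum_erase_and_lt_sum_erase (fun q => nbrAvg_nonneg_s13 G (hu.1 q) x) hlp
      ⟨hu.sum_nbrAvg_erase_lt hHmono hH0 hfmono hf0 hx (hpos l hl),
        hu.sum_nbrAvg_erase_lt hHmono hH0 hfmono hf0 hx (hpos p hp)⟩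

end IsSol

theorem gap_symmetry_general {V : Type*} {m : ℕ} [Fintype V] (G : SimpleGraph V) [DecidableRel G.Adj]
    (Bd : Set V) (H : V → ℝ → ℝ) (f : Fin m → V → ℝ → ℝ) (φ : Fin m → V → ℝ)
    (hHmono : ∀ x : V, Monotone (H x)) (hH0 : ∀ x, H x 0 = 0)
    (hfmono : ∀ l x, Monotone (f l x)) (hf0 : ∀ l x, f l x 0 = 0)
    (hφ : ∀ i j : Fin m, i ≠ j → ∀ x, φ i x * φ j x = 0)
    (hm : 2 ≤ m)
    (u v : Fin m → V → ℝ) (hu : IsSol G Bd H f φ u) (hv : IsSol G Bd H f φ v)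
    (A B : ℝ)
    (hA : IsGreatest {a : ℝ | ∃ (l : Fin m) (x : V), a = hatFn u l x - hatFn v l x} A)
    (hB : IsGreatest {b : ℝ | ∃ (l : Fin m) (x : V), b = hatFn v l x - hatFn u l x} B) :
    (0 < A ↔ 0 < B) ∧ (0 < A → A = B) := by
  have : Nontrivial (Fin m) := Fin.nontrivial_iff_two_le.2 hm
  have hAB : A = B := le_antisymm
    (le_of_isGreatest_hatFn_sub hu.1 (hv.support_subsingleton hHmono hH0 hfmono hf0 hφ) hA hB)
    (le_of_isGreatest_hatFn_sub hv.1 (hu.support_subsingleton hHmono hH0 hfmono hf0 hφ) hB hA)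
  exact ⟨by rw [hAB], fun _ => hAB⟩

theorem gap_symmetry {V : Type*} {m : ℕ} [Fintype V] (G : SimpleGraph V) [DecidableRel G.Adj]
    (Bd : Set V) (H : V → ℝ → ℝ) (f : Fin m → V → ℝ → ℝ) (φ : Fin m → V → ℝ)
    (hconn : G.Connected) (hBd : Bd.Nonempty)
    (hHmono : ∀ x : V, Monotone (H x)) (hH0 : ∀ x, H x 0 = 0)
    (hHodd : ∀ x s, H x (-s) = -H x s)
    (hfmono : ∀ l x, Monotone (f l x)) (hf0 : ∀ l x, f l x 0 = 0)
    (hfodd : ∀ l x s, f l x (-s) = -f l x s)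
    (hφ : ∀ i j : Fin m, i ≠ j → ∀ x, φ i x * φ j x = 0)
    (hφnn : ∀ l x, 0 ≤ φ l x)
    (hHlip : ∀ x s t, |H x s - H x t| ≤ |s - t|) (hm : 2 ≤ m)
    (u v : Fin m → V → ℝ) (hu : IsSol G Bd H f φ u) (hv : IsSol G Bd H f φ v)
    (A B : ℝ)
    (hA : IsGreatest {a : ℝ | ∃ (l : Fin m) (x : V), a = hatFn u l x - hatFn v l x} A)
    (hB : IsGreatest {b : ℝ | ∃ (l : Fin m) (x : V), b = hatFn v l x - hatFn u l x} B) :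
    (0 < A ↔ 0 < B) ∧ (0 < A → A = B) :=
  gap_symmetry_general G Bd H f φ hHmono hH0 hfmono hf0 hφ hm u v hu hv A B hA hB
end

section
/- For the special single-density case m = 1: if H(x,s) is nondecreasing and 1-Lipschitz in s with H(x,0) = 0, and f(x,s) is nondecreasing in s with f(x,0) = 0, then the equation u(x) = max(H(x, ū(x)) - f(x, u(x)), 0) on G^o with u = φ ≥ 0 on ∂G has at most one nonnegative solution. -/
open Finset

theorem uniqueness_one_phase {V : Type*} [Fintype V] (G : SimpleGraph V)
    [DecidableRel G.Adj] (Bd : Set V) (H f : V → ℝ → ℝ) (φ : V → ℝ)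
    (hconn : G.Connected) (hBd : Bd.Nonempty)
    (hHmono : ∀ x : V, Monotone (H x)) (hH0 : ∀ x, H x 0 = 0)
    (hHlip : ∀ x s t, |H x s - H x t| ≤ |s - t|)
    (hfmono : ∀ x : V, Monotone (f x)) (hf0 : ∀ x, f x 0 = 0)
    (hφnn : ∀ x, 0 ≤ φ x)
    (u v : V → ℝ) (hu0 : ∀ x, 0 ≤ u x) (hv0 : ∀ x, 0 ≤ v x)
    (hui : ∀ x, x ∉ Bd → u x = max (H x (nbrAvg G u x) - f x (u x)) 0)
    (hub : ∀ x ∈ Bd, u x = φ x)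
    (hvi : ∀ x, x ∉ Bd → v x = max (H x (nbrAvg G v x) - f x (v x)) 0)
    (hvb : ∀ x ∈ Bd, v x = φ x) :
    u = v := by
  -- It suffices to show `u ≤ v` for any pair of solutions; apply twice.
  have key : ∀ (u v : V → ℝ), (∀ x, 0 ≤ u x) → (∀ x, 0 ≤ v x) →
      (∀ x, x ∉ Bd → u x = max (H x (nbrAvg G u x) - f x (u x)) 0) →
      (∀ x ∈ Bd, u x = φ x) →
      (∀ x, x ∉ Bd → v x = max (H x (nbrAvg G v x) - f x (v x)) 0) →
      (∀ x ∈ Bd, v x = φ x) → ∀ x, u x ≤ v x := by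
    clear hu0 hv0 hui hub hvi hvb u v
    intro u v hu0 hv0 hui hub hvi hvb
    by_contra hcon
    push_neg at hcon
    obtain ⟨z, hz⟩ := hcon
    have hne : (Finset.univ : Finset V).Nonempty := ⟨z, mem_univ z⟩
    obtain ⟨x₀, -, hx₀⟩ := Finset.exists_max_image univ (fun x => u x - v x) hne
    set M := u x₀ - v x₀ with hM
    have hx₀' : ∀ y : V, u y - v y ≤ M := fun y => hx₀ y (mem_univ y)
    have hMpos : 0 < M := lt_of_lt_of_le (sub_pos.mpr hz) (hx₀' z)
    obtain ⟨b, hb⟩ := hBd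
    have step : ∀ x, u x - v x = M → ∀ y ∈ G.neighborFinset x, u y - v y = M := by
      intro x hx y hy
      have hxBd : x ∉ Bd := by
        intro hmem
        rw [hub x hmem, hvb x hmem, sub_self] at hx
        linarith
      have hux : 0 < u x := by
        have := hv0 x; linarith
      -- u x equals the positive branch
      have hueq : u x = H x (nbrAvg G u x) - f x (u x) := by
        have h := hui x hxBd
        rcases le_or_gt (H x (nbrAvg G u x) - f x (u x)) 0 with h0 | h0
        · rw [max_eq_right h0] at h; linarith
        · rw [max_eq_left h0.le] at h; exact h
      have hvge : H x (nbrAvg G v x) - f x (v x) ≤ v x := by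
        conv_rhs => rw [hvi x hxBd]
        exact le_max_left _ _
      have hfle : f x (v x) ≤ f x (u x) := hfmono x (by linarith)
      have hHle : M ≤ H x (nbrAvg G u x) - H x (nbrAvg G v x) := by
        have : u x - v x ≤ H x (nbrAvg G u x) - H x (nbrAvg G v x) := by linarith
        linarith [hx ▸ this]
      have havg : M ≤ nbrAvg G u x - nbrAvg G v x := by
        rcases le_or_gt (nbrAvg G u x) (nbrAvg G v x) with hle | hlt
        · have := hHmono x hle; linarith
        · have := hHlip x (nbrAvg G u x) (nbrAvg G v x)
          rw [abs_of_pos (sub_pos.mpr hlt)] at this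
          calc M ≤ H x (nbrAvg G u x) - H x (nbrAvg G v x) := hHle
            _ ≤ |H x (nbrAvg G u x) - H x (nbrAvg G v x)| := le_abs_self _
            _ ≤ nbrAvg G u x - nbrAvg G v x := this
      have hdpos : (0:ℝ) < (G.degree x : ℝ) := by
        have : 0 < G.degree x := by
          rw [← SimpleGraph.card_neighborFinset_eq_degree]
          exact Finset.card_pos.mpr ⟨y, hy⟩
        exact_mod_cast this
      have havg' : (G.degree x : ℝ) * M ≤ ∑ z ∈ G.neighborFinset x, (u z - v z) := by
        have : nbrAvg G u x - nbrAvg G v x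
            = (∑ z ∈ G.neighborFinset x, (u z - v z)) / (G.degree x) := by
          simp [nbrAvg, Finset.sum_sub_distrib, sub_div]
        rw [this] at havg
        rw [mul_comm]
        exact (le_div_iff₀ hdpos).mp havg
      by_contra hyne
      have hylt : u y - v y < M := lt_of_le_of_ne (hx₀' y) hyne
      have hsum : ∑ z ∈ G.neighborFinset x, (u z - v z)
          < ∑ z ∈ G.neighborFinset x, M :=
        Finset.sum_lt_sum (fun z _ => hx₀' z) ⟨y, hy, hylt⟩
      rw [Finset.sum_const, nsmul_eq_mul, SimpleGraph.card_neighborFinset_eq_degree] at hsum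
      linarith
    have walkstep : ∀ {x y : V}, G.Walk x y → u x - v x = M → u y - v y = M := by
      intro x y p
      induction p with
      | nil => exact id
      | @cons a c d h q ih =>
        intro ha
        exact ih (step a ha c (by simpa [SimpleGraph.mem_neighborFinset] using h))
    obtain ⟨p⟩ := hconn x₀ b
    have hbM := walkstep p hM.symm
    rw [hub b hb, hvb b hb, sub_self] at hbM
    linarith
  funext x
  exact le_antisymm (key u v hu0 hv0 hui hub hvi hvb x) (key v u hv0 hu0 hvi hvb hui hub x)
end
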